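/- arXiv:2110.12615 — 2 statements merged into one kernel-verified Lean document; each statement's English description precedes it below -/
import Mathlib

section
/- Let λ > 0 and let x₁,…,x_T ∈ ℝ^d with ‖x_t‖₂ ≤ L for all t. Define Z_t = λI + Σ_{i=1}^t x_i x_iᵀ. Then Σ_{t=1}^T min{1, ‖x_t‖²_{Z_{t-1}^{-1}}} ≤ 2d log((dλ + TL²)/(dλ)), where ‖x‖²_A = xᵀ A x. -/
/-!
The determinant of `Z_t = Z_{t-1} + x_t x_tᵀ` grows by the factor `1 + ‖x_t‖²_{Z_{t-1}⁻¹}`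
(matrix determinant lemma), so `∏ (1 + ‖x_t‖²_{Z_{t-1}⁻¹}) = det Z_T / λ^d`. By AM-GM on the
eigenvalues, `det Z_T ≤ (tr Z_T / d)^d ≤ ((dλ + T L²) / d)^d`. Taking logarithms and using
`min 1 u ≤ 2 log (1 + u)` for `u ≥ 0` gives the bound.
-/

open Matrix Finset

lemma min_one_le_two_mul_log_one_add {u : ℝ} (hu : 0 ≤ u) :
    min 1 u ≤ 2 * Real.log (1 + u) := by
  have hlog : u / (1 + u) ≤ Real.log (1 + u) := by
    have := Real.one_sub_inv_le_log_of_pos (x := 1 + u) (by linarith)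
    rwa [show 1 - (1 + u)⁻¹ = u / (1 + u) by field_simp; ring] at this
  have hmin : min 1 u ≤ 2 * (u / (1 + u)) := by
    rw [mul_div_assoc', le_div_iff₀ (by linarith)]
    rcases le_total u 1 with h | h
    · rw [min_eq_right h]; nlinarith
    · rw [min_eq_left h]; linarith
  linarith

lemma Finset.prod_le_sum_div_card_pow {ι : Type*} {s : Finset ι} (hs : s.Nonempty) {z : ι → ℝ}
    (hz : ∀ i ∈ s, 0 ≤ z i) : ∏ i ∈ s, z i ≤ ((∑ i ∈ s, z i) / #s) ^ #s := by
  have hcard : (0 : ℝ) < #s := by exact_mod_cast hs.card_pos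
  have amgm := Real.geom_mean_le_arith_mean s (fun _ => 1) z (fun _ _ => zero_le_one)
    (by simpa using hcard) hz
  simp only [Real.rpow_one, one_mul, sum_const, nsmul_eq_mul, mul_one] at amgm
  have hprod : 0 ≤ ∏ i ∈ s, z i := prod_nonneg hz
  calc ∏ i ∈ s, z i = ((∏ i ∈ s, z i) ^ ((#s : ℝ)⁻¹)) ^ #s := by
        rw [← Real.rpow_natCast, ← Real.rpow_mul hprod, inv_mul_cancel₀ hcard.ne', Real.rpow_one]
    _ ≤ ((∑ i ∈ s, z i) / #s) ^ #s := by gcongr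

namespace Matrix

variable {n : Type*} [Fintype n] [DecidableEq n]

theorem det_add_vecMulVec {α : Type*} [CommRing α] {A : Matrix n n α} (hA : IsUnit A.det)
    (u v : n → α) : (A + vecMulVec u v).det = A.det * (1 + v ⬝ᵥ A⁻¹ *ᵥ u) := by
  rw [vecMulVec_eq Unit, det_add_replicateCol_mul_replicateRow hA]
  congr 1
  rw [det_unique, add_apply, one_apply_eq, ← replicateRow_vecMul,
    replicateRow_mul_replicateCol_apply, ← dotProduct_mulVec]

theorem PosSemidef.det_le_trace_div_card_pow [Nonempty n] {A : Matrix n n ℝ}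
    (hA : A.PosSemidef) : A.det ≤ (A.trace / Fintype.card n) ^ Fintype.card n := by
  rw [hA.isHermitian.det_eq_prod_eigenvalues, hA.isHermitian.trace_eq_sum_eigenvalues]
  simpa using prod_le_sum_div_card_pow univ_nonempty fun i _ => hA.eigenvalues_nonneg i

end Matrix

section EllipticalPotential

variable {n : Type*} [DecidableEq n] {lam : ℝ} (x : ℕ → n → ℝ)

/-- The paper's `Z_t`, with indices shifted: `x i` is the paper's `x_{i+1}`. -/
noncomputable def regularizedGram (lam : ℝ) (t : ℕ) : Matrix n n ℝ :=
  lam • 1 + ∑ i ∈ range t, vecMulVec (x i) (x i)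

lemma regularizedGram_succ (t : ℕ) :
    regularizedGram x lam (t + 1) = regularizedGram x lam t + vecMulVec (x t) (x t) := by
  simp only [regularizedGram, sum_range_succ, add_assoc]

lemma posDef_regularizedGram [Fintype n] (hlam : 0 < lam) (t : ℕ) :
    (regularizedGram x lam t).PosDef :=
  (PosDef.one.smul hlam).add_posSemidef
    (posSemidef_sum _ fun i _ => by simpa using posSemidef_vecMulVec_self_star (x i))

lemma det_regularizedGram [Fintype n] (hlam : 0 < lam) (t : ℕ) :
    (regularizedGram x lam t).det =
      lam ^ Fintype.card n * ∏ i ∈ range t, (1 + x i ⬝ᵥ (regularizedGram x lam i)⁻¹ *ᵥ x i) := by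
  induction t with
  | zero => simp [regularizedGram]
  | succ t ih =>
    rw [regularizedGram_succ, det_add_vecMulVec
      ((isUnit_iff_isUnit_det _).mp (posDef_regularizedGram x hlam t).isUnit), ih,
      prod_range_succ, mul_assoc]

lemma trace_regularizedGram [Fintype n] (t : ℕ) :
    (regularizedGram x lam t).trace = Fintype.card n * lam + ∑ i ∈ range t, x i ⬝ᵥ x i := by
  simp [regularizedGram, trace_sum, trace_vecMulVec, mul_comm]

lemma prod_one_add_inv_regularizedGram_le [Fintype n] [Nonempty n] (hlam : 0 < lam) {L : ℝ}
    (hL : ∀ t, x t ⬝ᵥ x t ≤ L ^ 2) (T : ℕ) :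
    ∏ t ∈ range T, (1 + x t ⬝ᵥ (regularizedGram x lam t)⁻¹ *ᵥ x t) ≤
      ((Fintype.card n * lam + T * L ^ 2) / (Fintype.card n * lam)) ^ Fintype.card n := by
  set d := Fintype.card n
  have hd : (0 : ℝ) < d := by exact_mod_cast Fintype.card_pos
  have htrace : (regularizedGram x lam T).trace ≤ d * lam + T * L ^ 2 := by
    rw [trace_regularizedGram]
    gcongr
    simpa using sum_le_sum fun t (_ : t ∈ range T) => hL t
  have hdet := (posDef_regularizedGram x hlam T).posSemidef.det_le_trace_div_card_pow
  rw [det_regularizedGram x hlam] at hdet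
  have htr_nonneg : 0 ≤ (regularizedGram x lam T).trace :=
    (posDef_regularizedGram x hlam T).posSemidef.trace_nonneg
  rw [div_mul_eq_div_div, div_pow, le_div_iff₀ (by positivity), mul_comm]
  exact hdet.trans (by gcongr)

end EllipticalPotential

theorem stmt0 (d T : ℕ) (lam L : ℝ) (hlam : 0 < lam)
    (x : ℕ → Fin d → ℝ) (hL : ∀ t, Real.sqrt (x t ⬝ᵥ x t) ≤ L) :
    ∑ t ∈ Finset.range T,
      min 1 (x t ⬝ᵥ (((lam • (1 : Matrix (Fin d) (Fin d) ℝ) +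
        ∑ i ∈ Finset.range t, vecMulVec (x i) (x i))⁻¹) *ᵥ x t))
      ≤ 2 * d * Real.log ((d * lam + T * L ^ 2) / (d * lam)) := by
  rcases Nat.eq_zero_or_pos d with rfl | hd
  · simp [dotProduct]
  have : Nonempty (Fin d) := Fin.pos_iff_nonempty.mp hd
  change ∑ t ∈ range T, min 1 (x t ⬝ᵥ (regularizedGram x lam t)⁻¹ *ᵥ x t) ≤ _
  have hu (t : ℕ) : 0 ≤ x t ⬝ᵥ (regularizedGram x lam t)⁻¹ *ᵥ x t := by
    simpa using (posDef_regularizedGram x hlam t).inv.posSemidef.dotProduct_mulVec_nonneg (x t)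
  have hL2 (t : ℕ) : x t ⬝ᵥ x t ≤ L ^ 2 := (Real.sqrt_le_iff.mp (hL t)).2
  calc ∑ t ∈ range T, min 1 (x t ⬝ᵥ (regularizedGram x lam t)⁻¹ *ᵥ x t)
      ≤ ∑ t ∈ range T, 2 * Real.log (1 + x t ⬝ᵥ (regularizedGram x lam t)⁻¹ *ᵥ x t) :=
        sum_le_sum fun t _ => min_one_le_two_mul_log_one_add (hu t)
    _ = 2 * Real.log (∏ t ∈ range T, (1 + x t ⬝ᵥ (regularizedGram x lam t)⁻¹ *ᵥ x t)) := by
        rw [← mul_sum, Real.log_prod fun t _ => by linarith [hu t]]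
    _ ≤ 2 * Real.log (((d * lam + T * L ^ 2) / (d * lam)) ^ d) := by
        gcongr
        · exact prod_pos fun t _ => by linarith [hu t]
        · simpa using prod_one_add_inv_regularizedGram_le x hlam hL2 T
    _ = 2 * d * Real.log ((d * lam + T * L ^ 2) / (d * lam)) := by
        rw [Real.log_pow]; ring
end

section
/- Let Z be a d×d positive definite matrix, μ̂ ∈ ℝ^d, β > 0, and C = {μ : ‖μ − μ̂‖_Z ≤ β}. Suppose μ* ∈ C. Let D ⊆ ℝ^d be nonempty and finite, and let a ∈ D, ν ∈ C maximize ⟨a', μ'⟩ over (a', μ') ∈ D × C. Then for every a* ∈ D, ⟨a*, μ*⟩ − ⟨a, μ*⟩ ≤ 2β‖a‖_{Z^{-1}}. -/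
/-!
Since `(a*, μ*)` is feasible, optimism gives `⟨a*, μ*⟩ ≤ ⟨a, ν⟩`, so the regret is at most
`⟨a, ν - μ*⟩`. Cauchy–Schwarz for the inner product `x ⬝ᵥ Z *ᵥ y`, applied to `Z⁻¹ a` and
`ν - μ*`, bounds this by `‖a‖_{Z⁻¹} ‖ν - μ*‖_Z`, and the triangle inequality through `μ̂`
gives `‖ν - μ*‖_Z ≤ 2β`.
-/

open Matrix

namespace Matrix

variable {n : Type*} [Fintype n] {Z : Matrix n n ℝ}

lemma IsHermitian.dotProduct_mulVec_comm (hZ : Z.IsHermitian) (x y : n → ℝ) :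
    x ⬝ᵥ (Z *ᵥ y) = y ⬝ᵥ (Z *ᵥ x) := by
  rw [← dotProduct_transpose_mulVec, ← conjTranspose_eq_transpose_of_trivial, hZ.eq]

namespace PosSemidef

lemma dotProduct_mulVec_self_nonneg (hZ : Z.PosSemidef) (x : n → ℝ) : 0 ≤ x ⬝ᵥ (Z *ᵥ x) := by
  simpa using hZ.dotProduct_mulVec_nonneg x

lemma dotProduct_mulVec_sq_le (hZ : Z.PosSemidef) (x y : n → ℝ) :
    (x ⬝ᵥ (Z *ᵥ y)) ^ 2 ≤ (x ⬝ᵥ (Z *ᵥ x)) * (y ⬝ᵥ (Z *ᵥ y)) := by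
  -- `t ↦ ‖x + t y‖_Z²` is a nonnegative quadratic, so its discriminant is nonpositive.
  have hquad : ∀ t : ℝ, 0 ≤ (y ⬝ᵥ (Z *ᵥ y)) * (t * t) + 2 * (x ⬝ᵥ (Z *ᵥ y)) * t
      + x ⬝ᵥ (Z *ᵥ x) := fun t => by
    have h := hZ.dotProduct_mulVec_self_nonneg (x + t • y)
    simp only [mulVec_add, mulVec_smul, add_dotProduct, dotProduct_add, smul_dotProduct,
      dotProduct_smul, smul_eq_mul, ← hZ.isHermitian.dotProduct_mulVec_comm x y] at h
    linear_combination h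
  have hdiscrim := discrim_le_zero hquad
  rw [discrim] at hdiscrim
  linarith

lemma dotProduct_mulVec_le_sqrt_mul_sqrt (hZ : Z.PosSemidef) (x y : n → ℝ) :
    x ⬝ᵥ (Z *ᵥ y) ≤ √(x ⬝ᵥ (Z *ᵥ x)) * √(y ⬝ᵥ (Z *ᵥ y)) := by
  rw [← Real.sqrt_mul (hZ.dotProduct_mulVec_self_nonneg x)]
  exact (le_abs_self _).trans (Real.abs_le_sqrt (hZ.dotProduct_mulVec_sq_le x y))

lemma sqrt_dotProduct_mulVec_add_le (hZ : Z.PosSemidef) (x y : n → ℝ) :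
    √((x + y) ⬝ᵥ (Z *ᵥ (x + y))) ≤ √(x ⬝ᵥ (Z *ᵥ x)) + √(y ⬝ᵥ (Z *ᵥ y)) := by
  have hx := Real.sq_sqrt (hZ.dotProduct_mulVec_self_nonneg x)
  have hy := Real.sq_sqrt (hZ.dotProduct_mulVec_self_nonneg y)
  have hxy := hZ.dotProduct_mulVec_le_sqrt_mul_sqrt x y
  rw [Real.sqrt_le_iff]
  refine ⟨by positivity, ?_⟩
  simp only [mulVec_add, add_dotProduct, dotProduct_add,
    ← hZ.isHermitian.dotProduct_mulVec_comm x y]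
  linarith

lemma sqrt_dotProduct_mulVec_sub_le (hZ : Z.PosSemidef) (x y z : n → ℝ) :
    √((x - y) ⬝ᵥ (Z *ᵥ (x - y))) ≤
      √((x - z) ⬝ᵥ (Z *ᵥ (x - z))) + √((y - z) ⬝ᵥ (Z *ᵥ (y - z))) := by
  have h := hZ.sqrt_dotProduct_mulVec_add_le (x - z) (z - y)
  rwa [sub_add_sub_cancel, ← neg_sub y z, mulVec_neg, neg_dotProduct, dotProduct_neg,
    neg_neg] at h

end PosSemidef

lemma PosDef.dotProduct_le_sqrt_inv_mul_sqrt [DecidableEq n] (hZ : Z.PosDef) (a u : n → ℝ) :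
    a ⬝ᵥ u ≤ √(a ⬝ᵥ (Z⁻¹ *ᵥ a)) * √(u ⬝ᵥ (Z *ᵥ u)) := by
  have hw : Z *ᵥ (Z⁻¹ *ᵥ a) = a := by
    rw [mulVec_mulVec, mul_nonsing_inv _ ((isUnit_iff_isUnit_det Z).mp hZ.isUnit), one_mulVec]
  have hdual : (Z⁻¹ *ᵥ a) ⬝ᵥ (Z *ᵥ (Z⁻¹ *ᵥ a)) = a ⬝ᵥ (Z⁻¹ *ᵥ a) := by
    rw [hw, dotProduct_comm]
  calc a ⬝ᵥ u = (Z⁻¹ *ᵥ a) ⬝ᵥ (Z *ᵥ u) := by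
        rw [hZ.isHermitian.dotProduct_mulVec_comm, hw, dotProduct_comm]
    _ ≤ √(a ⬝ᵥ (Z⁻¹ *ᵥ a)) * √(u ⬝ᵥ (Z *ᵥ u)) := by
        rw [← hdual]
        exact hZ.posSemidef.dotProduct_mulVec_le_sqrt_mul_sqrt _ _

end Matrix

theorem stmt5_general (d : ℕ) (Z : Matrix (Fin d) (Fin d) ℝ) (hZ : Z.PosDef)
    (muhat mustar : Fin d → ℝ) (beta : ℝ)
    (Conf : Set (Fin d → ℝ))
    (hConf : Conf = {mu | Real.sqrt ((mu - muhat) ⬝ᵥ (Z *ᵥ (mu - muhat))) ≤ beta})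
    (hstar : mustar ∈ Conf)
    (D : Finset (Fin d → ℝ))
    (a nu : Fin d → ℝ) (hnu : nu ∈ Conf)
    (hmax : ∀ a' ∈ D, ∀ mu' ∈ Conf, a' ⬝ᵥ mu' ≤ a ⬝ᵥ nu) :
    ∀ astar ∈ D, astar ⬝ᵥ mustar - a ⬝ᵥ mustar ≤
      2 * beta * Real.sqrt (a ⬝ᵥ (Z⁻¹ *ᵥ a)) := by
  intro astar hastar
  subst hConf
  have hoptimism : astar ⬝ᵥ mustar ≤ a ⬝ᵥ nu := hmax astar hastar mustar hstar
  have hwidth : √((nu - mustar) ⬝ᵥ (Z *ᵥ (nu - mustar))) ≤ 2 * beta := by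
    linarith [hZ.posSemidef.sqrt_dotProduct_mulVec_sub_le nu mustar muhat, hnu.out, hstar.out]
  have hdev : a ⬝ᵥ (nu - mustar) ≤ √(a ⬝ᵥ (Z⁻¹ *ᵥ a)) * (2 * beta) :=
    (hZ.dotProduct_le_sqrt_inv_mul_sqrt a _).trans
      (mul_le_mul_of_nonneg_left hwidth (Real.sqrt_nonneg _))
  rw [dotProduct_sub] at hdev
  linarith

theorem stmt5 (d : ℕ) (Z : Matrix (Fin d) (Fin d) ℝ) (hZ : Z.PosDef)
    (muhat mustar : Fin d → ℝ) (beta : ℝ) (hbeta : 0 < beta)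
    (Conf : Set (Fin d → ℝ))
    (hConf : Conf = {mu | Real.sqrt ((mu - muhat) ⬝ᵥ (Z *ᵥ (mu - muhat))) ≤ beta})
    (hstar : mustar ∈ Conf)
    (D : Finset (Fin d → ℝ)) (hD : D.Nonempty)
    (a nu : Fin d → ℝ) (ha : a ∈ D) (hnu : nu ∈ Conf)
    (hmax : ∀ a' ∈ D, ∀ mu' ∈ Conf, a' ⬝ᵥ mu' ≤ a ⬝ᵥ nu) :
    ∀ astar ∈ D, astar ⬝ᵥ mustar - a ⬝ᵥ mustar ≤
      2 * beta * Real.sqrt (a ⬝ᵥ (Z⁻¹ *ᵥ a)) :=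
  stmt5_general d Z hZ muhat mustar beta Conf hConf hstar D a nu hnu hmax
end
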